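/- Let N = 2^k·N₀ with k ≥ 1 and N₀ odd, and let P_N denote the characteristic polynomial of the adjacency matrix C_N of the modular Collatz graph mod N. Then P_N(x) = x^{N/2} · P_{N/2}(x). -/

import Mathlib

/-- The Collatz function. -/
def collatzT (n : ℕ) : ℕ := if n % 2 = 0 then n / 2 else (3 * n + 1) / 2

/-- Adjacency matrix (over ℤ) of the modular Collatz graph mod `N`:
`c i j` counts `n ∈ {0,…,2N−1}` with `n ≡ i` and `T n ≡ j (mod N)`. -/
def collatzMat (N : ℕ) : Matrix (Fin N) (Fin N) ℤ :=
  fun i j =>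
    (((Finset.range (2 * N)).filter
      (fun n => n % N = i.val ∧ collatzT n % N = j.val)).card : ℤ)

/-!
For `N = 2M`, the Collatz map satisfies `T(n + 2M) ≡ T(n) + M (mod 2M)`, so the two lifts
`i` and `i + 2M` of a residue `i` contribute the indicators of `T(i) ≡ j` and `T(i) + M ≡ j`
modulo `2M`, whose sum is the indicator of `T(i) ≡ j (mod M)`. Hence, splitting `ℤ/2M` into
`{0,…,M-1}` and `{M,…,2M-1}`, the matrix `C_{2M}` has block form `[[A, A], [B, B]]` with
`A + B = C_M`. Writing it as `[A; B] * [1 1]` and swapping the factors gives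
`P_{2M} = X^M · P_M`.
-/

theorem Nat.modEq_iff_modEq_two_mul_or_add {M x y : ℕ} :
    x ≡ y [MOD M] ↔ x ≡ y [MOD 2 * M] ∨ x + M ≡ y [MOD 2 * M] := by
  simp only [Nat.modEq_iff_dvd]
  push_cast
  constructor
  · rintro ⟨t, ht⟩
    rcases Int.even_or_odd t with ⟨s, hs⟩ | ⟨s, hs⟩
    · exact Or.inl ⟨s, by rw [ht, hs]; ring⟩
    · exact Or.inr ⟨s, by linear_combination ht + (M : ℤ) * hs⟩
  · rintro (⟨t, ht⟩ | ⟨t, ht⟩)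
    · exact ⟨2 * t, by rw [ht]; ring⟩
    · exact ⟨2 * t + 1, by linear_combination ht⟩

theorem Nat.ite_modEq_two_mul_add_ite {M : ℕ} (hM : 0 < M) (x y : ℕ) :
    ((if x ≡ y [MOD 2 * M] then 1 else 0) + if x + M ≡ y [MOD 2 * M] then 1 else 0 : ℤ) =
      if x ≡ y [MOD M] then 1 else 0 := by
  have not_both (h : x ≡ y [MOD 2 * M]) (h' : x + M ≡ y [MOD 2 * M]) : False := by
    have hshift : x + M ≡ x + 0 [MOD 2 * M] := h'.trans h.symm
    have := Nat.le_of_dvd hM (Nat.modEq_zero_iff_dvd.mp (hshift.add_left_cancel' x))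
    omega
  have key := @Nat.modEq_iff_modEq_two_mul_or_add M x y
  by_cases h : x ≡ y [MOD 2 * M] <;> by_cases h' : x + M ≡ y [MOD 2 * M]
  · exact (not_both h h').elim
  · simp [h, h', key.mpr (.inl h)]
  · simp [h, h', key.mpr (.inr h')]
  · simp [h, h', key]

theorem collatzT_add_two_mul_modEq (n M : ℕ) :
    collatzT (n + 2 * M) ≡ collatzT n + M [MOD 2 * M] := by
  unfold collatzT
  rcases Nat.mod_two_eq_zero_or_one n with hn | hn
  · rw [if_pos (by omega), if_pos hn, show (n + 2 * M) / 2 = n / 2 + M by omega]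
  · rw [if_neg (by omega), if_neg (by omega),
      show (3 * (n + 2 * M) + 1) / 2 = (3 * n + 1) / 2 + M + 2 * M by omega]
    exact Nat.add_modEq_right

theorem Finset.filter_mod_eq_range_two_mul {N i : ℕ} (hi : i < N) :
    (Finset.range (2 * N)).filter (· % N = i) = {i, i + N} := by
  ext n
  simp only [Finset.mem_filter, Finset.mem_range, Finset.mem_insert, Finset.mem_singleton]
  constructor
  · rintro ⟨hn, rfl⟩
    have := Nat.div_add_mod n N
    have : n / N < 2 := Nat.div_lt_of_lt_mul (by omega)
    interval_cases h : n / N <;> omega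
  · rintro (rfl | rfl)
    · exact ⟨by omega, Nat.mod_eq_of_lt hi⟩
    · exact ⟨by omega, by rw [Nat.add_mod_right, Nat.mod_eq_of_lt hi]⟩

theorem collatzMat_apply {N : ℕ} (i j : Fin N) :
    collatzMat N i j = (if collatzT i ≡ j [MOD N] then 1 else 0) +
      if collatzT (i + N) ≡ j [MOD N] then 1 else 0 := by
  have hmod (n : ℕ) : collatzT n % N = j ↔ collatzT n ≡ j [MOD N] := by
    rw [Nat.ModEq, Nat.mod_eq_of_lt j.isLt]
  rw [collatzMat, ← Finset.filter_filter, Finset.filter_mod_eq_range_two_mul i.isLt,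
    Finset.card_filter, Finset.sum_pair (by omega)]
  simp [hmod]

theorem collatzMat_two_mul_apply {M : ℕ} (i j : Fin (2 * M)) :
    collatzMat (2 * M) i j = if collatzT i ≡ j [MOD M] then 1 else 0 := by
  have hM : 0 < M := by have := i.pos; omega
  have hshift : collatzT (i + 2 * M) ≡ j [MOD 2 * M] ↔ collatzT i + M ≡ j [MOD 2 * M] :=
    ⟨(collatzT_add_two_mul_modEq i M).symm.trans, (collatzT_add_two_mul_modEq i M).trans⟩
  simp only [collatzMat_apply, hshift]
  exact Nat.ite_modEq_two_mul_add_ite hM _ _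

open Polynomial in
theorem Matrix.charpoly_fromBlocks_self_self {n R : Type*} [Fintype n] [DecidableEq n]
    [CommRing R] (A B : Matrix n n R) :
    (fromBlocks A A B B).charpoly = X ^ Fintype.card n * (A + B).charpoly := by
  have h := charpoly_mul_comm_of_le (fromRows A B) (fromCols 1 1) (by simp)
  rw [fromRows_mul_fromCols, fromCols_mul_fromRows] at h
  simpa [two_mul] using h

theorem charpoly_collatzMat_two_mul (M : ℕ) :
    (collatzMat (2 * M)).charpoly = Polynomial.X ^ M * (collatzMat M).charpoly := by
  set e : Fin M ⊕ Fin M ≃ Fin (2 * M) := finSumFinEquiv.trans (finCongr (two_mul M).symm)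
  set A := Matrix.reindex e.symm e.symm (collatzMat (2 * M))
  have hcols : A.toBlocks₁₂ = A.toBlocks₁₁ ∧ A.toBlocks₂₂ = A.toBlocks₂₁ := by
    constructor <;> ext a b <;> simp [A, e, Matrix.toBlocks₁₁, Matrix.toBlocks₁₂,
      Matrix.toBlocks₂₁, Matrix.toBlocks₂₂, collatzMat_two_mul_apply]
  have hsum : A.toBlocks₁₁ + A.toBlocks₂₁ = collatzMat M := by
    ext a b
    simp [A, e, Matrix.toBlocks₁₁, Matrix.toBlocks₂₁, collatzMat_two_mul_apply,
      collatzMat_apply (N := M)]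
  calc (collatzMat (2 * M)).charpoly = A.charpoly := (Matrix.charpoly_reindex _ _).symm
    _ = _ := by
      rw [← Matrix.fromBlocks_toBlocks A, hcols.1, hcols.2, Matrix.charpoly_fromBlocks_self_self,
        hsum, Fintype.card_fin]

theorem charpoly_even_modulus_general (N N₀ k : ℕ) (hk : 1 ≤ k)
    (hN : N = 2 ^ k * N₀) :
    (collatzMat N).charpoly = Polynomial.X ^ (N / 2) * (collatzMat (N / 2)).charpoly := by
  obtain ⟨M, rfl⟩ : 2 ∣ N := hN ▸ (dvd_pow_self 2 (by omega)).mul_right N₀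
  rw [Nat.mul_div_cancel_left M two_pos]
  exact charpoly_collatzMat_two_mul M

theorem charpoly_even_modulus (N N₀ k : ℕ) (hk : 1 ≤ k) (hN₀ : Odd N₀)
    (hN : N = 2 ^ k * N₀) :
    (collatzMat N).charpoly = Polynomial.X ^ (N / 2) * (collatzMat (N / 2)).charpoly :=
  charpoly_even_modulus_general N N₀ k hk hN
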